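/- Let g be real symmetric positive definite and R real antisymmetric, n×n. Define D(t) = iR coth(t g⁻¹ iR) (interpreted via the even power series of z coth z, so D(t) = (1/t) g Ψ(t g⁻¹ iR) with Ψ(z) = z coth z). Then det(D(t) + iR) = det( iR / sinh(t g⁻¹ iR) ) = det( g⁻¹ sinh(t g⁻¹ iR)/(g⁻¹ iR) )⁻¹, where sinh(z)/z is interpreted as its even power series. -/

import Mathlib

/-!
`z coth z + z = z eᶻ / sinh z`, so the even series `Ψ(z) = z coth z` and `sinh z / z` satisfy
`(Ψ(z) + z) · (sinh z / z) = eᶻ`; comparing coefficients, this is an identity between Bernoulli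
numbers and factorials, read off from `x / (eˣ - 1)`. For `M = t g⁻¹ iR` the same Cauchy product
gives `(Ψ(M) + M) · (sinh M / M) = exp M`, while `D + iR = t⁻¹ g (Ψ(M) + M)`. Finally
`det (exp M) = 1`: since `g` is symmetric and `R` antisymmetric, `Mᵀ = g (-M) g⁻¹`.
-/

open Matrix

/-- The even power series `Ψ(M) = M coth M = Σ_k (2^{2k} B_{2k}/(2k)!) M^{2k}`
(`B_{2k}` the Bernoulli numbers), applied to a matrix `M`. -/
noncomputable def cothSeries (n : ℕ) (M : Matrix (Fin n) (Fin n) ℂ) :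
    Matrix (Fin n) (Fin n) ℂ :=
  ∑' k : ℕ, ((2 ^ (2 * k) * (bernoulli (2 * k) : ℂ)) / (Nat.factorial (2 * k) : ℂ))
    • M ^ (2 * k)

/-- The even power series `sinh(M)/M = Σ_k M^{2k}/(2k+1)!` applied to a matrix `M`. -/
noncomputable def sinhDivSeries (n : ℕ) (M : Matrix (Fin n) (Fin n) ℂ) :
    Matrix (Fin n) (Fin n) ℂ :=
  ∑' k : ℕ, ((Nat.factorial (2 * k + 1) : ℂ))⁻¹ • M ^ (2 * k)

open Finset

lemma Finset.sum_range_two_mul_add_one_of_odd_eq_zero {β : Type*} [AddCommMonoid β]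
    {f : ℕ → β} (hf : ∀ i, Odd i → f i = 0) (N : ℕ) :
    ∑ i ∈ range (2 * N + 1), f i = ∑ k ∈ range (N + 1), f (2 * k) := by
  induction N with
  | zero => simp
  | succ N ih =>
    rw [show 2 * (N + 1) + 1 = 2 * N + 1 + 1 + 1 by ring, sum_range_succ, sum_range_succ, ih,
      hf (2 * N + 1) (odd_two_mul_add_one N), add_zero, sum_range_succ _ (N + 1)]
    rfl

namespace PowerSeries

/-- `x coth x = 2x / (e^{2x} - 1) + x`. -/
noncomputable def xCoth : ℚ⟦X⟧ := rescale 2 (bernoulliPowerSeries ℚ) + X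

noncomputable def sinhDivX : ℚ⟦X⟧ := mk fun m => if Even m then ((m + 1).factorial : ℚ)⁻¹ else 0

noncomputable def cosh : ℚ⟦X⟧ := mk fun m => if Even m then (m.factorial : ℚ)⁻¹ else 0

lemma coeff_evalNegHom_exp (m : ℕ) :
    coeff m (evalNegHom (exp ℚ)) = (-1) ^ m * (m.factorial : ℚ)⁻¹ := by
  simp [evalNegHom, coeff_rescale, coeff_exp]

lemma coeff_xCoth (i : ℕ) :
    coeff i xCoth = 2 ^ i * (bernoulli i / i.factorial) + if i = 1 then 1 else 0 := by
  simp [xCoth, bernoulliPowerSeries, coeff_rescale, coeff_X, algebraMap]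

lemma coeff_xCoth_of_odd {i : ℕ} (hi : Odd i) : coeff i xCoth = 0 := by
  rw [coeff_xCoth]
  obtain rfl | hi1 := eq_or_ne i 1
  · norm_num [bernoulli_one]
  · rw [if_neg hi1, bernoulli_eq_bernoulli'_of_ne_one hi1,
      bernoulli'_eq_zero_of_odd hi (lt_of_le_of_ne hi.pos hi1.symm)]
    simp

lemma two_mul_X_mul_sinhDivX : 2 * (X * sinhDivX) = exp ℚ - evalNegHom (exp ℚ) := by
  ext m
  rw [← map_ofNat C, coeff_C_mul, map_sub, coeff_exp, Algebra.algebraMap_self_apply,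
    coeff_evalNegHom_exp]
  rcases m with _ | m
  · simp
  rw [coeff_succ_X_mul, sinhDivX, coeff_mk]
  rcases Nat.even_or_odd m with hm | hm
  · rw [if_pos hm, hm.add_one.neg_one_pow]
    ring
  · rw [if_neg (Nat.not_even_iff_odd.mpr hm), hm.add_one.neg_one_pow]
    simp

lemma two_mul_cosh : 2 * cosh = exp ℚ + evalNegHom (exp ℚ) := by
  ext m
  rw [← map_ofNat C, coeff_C_mul, map_add, coeff_exp, Algebra.algebraMap_self_apply,
    coeff_evalNegHom_exp, cosh, coeff_mk]
  rcases Nat.even_or_odd m with hm | hm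
  · rw [if_pos hm, hm.neg_one_pow]
    ring
  · rw [if_neg (Nat.not_even_iff_odd.mpr hm), hm.neg_one_pow]
    simp

lemma xCoth_mul_exp_sub_exp_neg :
    xCoth * (exp ℚ - evalNegHom (exp ℚ)) = X * (exp ℚ + evalNegHom (exp ℚ)) := by
  set E := exp ℚ
  set E' := evalNegHom E
  have hEE' : E * E' = 1 := exp_mul_exp_neg_eq_one
  have hE2 : rescale 2 E = E * E := by
    rw [show (2 : ℚ) = 1 + 1 by norm_num, ← exp_mul_exp_eq_exp_add, rescale_one]
    rfl
  have hB : rescale 2 (bernoulliPowerSeries ℚ) * (E * E - 1) = 2 * X := by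
    have h := congrArg (rescale (2 : ℚ)) (bernoulliPowerSeries_mul_exp_sub_one ℚ)
    rwa [map_mul, map_sub, map_one, rescale_X, hE2, map_ofNat] at h
  rw [xCoth]
  linear_combination E' * hB - (rescale 2 (bernoulliPowerSeries ℚ) * E) * hEE'

lemma xCoth_mul_sinhDivX : xCoth * sinhDivX = cosh := by
  have h2 : (2 : ℚ⟦X⟧) ≠ 0 := by
    rw [← map_ofNat C]
    exact (map_ne_zero_iff _ C_injective).mpr two_ne_zero
  refine mul_left_cancel₀ (mul_ne_zero h2 X_ne_zero) ?_
  linear_combination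
    xCoth * two_mul_X_mul_sinhDivX + xCoth_mul_exp_sub_exp_neg - X * two_mul_cosh

end PowerSeries

open PowerSeries in
lemma sum_antidiagonal_bernoulli_mul_inv_factorial {K : Type*} [Field K] [CharZero K] (N : ℕ) :
    ∑ p ∈ antidiagonal N,
      (2 ^ (2 * p.1) * (bernoulli (2 * p.1) : K) / (2 * p.1).factorial) *
        ((2 * p.2 + 1).factorial : K)⁻¹
      = ((2 * N).factorial : K)⁻¹ := by
  have h := congrArg (coeff (2 * N)) xCoth_mul_sinhDivX
  rw [coeff_mul, Nat.sum_antidiagonal_eq_sum_range_succ_mk,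
    sum_range_two_mul_add_one_of_odd_eq_zero fun i hi => by rw [coeff_xCoth_of_odd hi, zero_mul],
    cosh, coeff_mk, if_pos (even_two_mul N)] at h
  rw [Nat.sum_antidiagonal_eq_sum_range_succ_mk]
  convert congrArg (Rat.cast : ℚ → K) h using 1
  · push_cast
    refine sum_congr rfl fun k hk => ?_
    have hkN : k ≤ N := Nat.lt_succ_iff.mp (mem_range.mp hk)
    rw [coeff_xCoth, if_neg (by omega), add_zero, sinhDivX, coeff_mk, ← Nat.mul_sub,
      if_pos (even_two_mul _)]
    push_cast
    ring
  · push_cast; rfl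

section CauchyProduct

variable {𝕂 𝔸 : Type*} [RCLike 𝕂] [NormedRing 𝔸] [NormedAlgebra 𝕂 𝔸] [CompleteSpace 𝔸]

lemma hasSum_cosh_coth_mul_sinhDiv {x : 𝔸}
    (h₁ : Summable fun k : ℕ =>
      ‖(2 ^ (2 * k) * (bernoulli (2 * k) : 𝕂) / (2 * k).factorial) • x ^ (2 * k)‖)
    (h₂ : Summable fun k : ℕ => ‖((2 * k + 1).factorial : 𝕂)⁻¹ • x ^ (2 * k)‖) :
    HasSum (fun k : ℕ => ((2 * k).factorial : 𝕂)⁻¹ • x ^ (2 * k))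
      ((∑' k : ℕ, (2 ^ (2 * k) * (bernoulli (2 * k) : 𝕂) / (2 * k).factorial) • x ^ (2 * k)) *
        ∑' k : ℕ, ((2 * k + 1).factorial : 𝕂)⁻¹ • x ^ (2 * k)) := by
  have hterm (N : ℕ) : ∑ p ∈ antidiagonal N,
      ((2 ^ (2 * p.1) * (bernoulli (2 * p.1) : 𝕂) / (2 * p.1).factorial) • x ^ (2 * p.1)) *
        (((2 * p.2 + 1).factorial : 𝕂)⁻¹ • x ^ (2 * p.2))
      = ((2 * N).factorial : 𝕂)⁻¹ • x ^ (2 * N) := by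
    rw [← sum_antidiagonal_bernoulli_mul_inv_factorial, sum_smul]
    refine sum_congr rfl fun p hp => ?_
    rw [smul_mul_smul_comm, ← pow_add, ← mul_add, mem_antidiagonal.mp hp]
  rw [tsum_mul_tsum_eq_tsum_sum_antidiagonal_of_summable_norm h₁ h₂]
  simp only [hterm]
  exact ((summable_norm_sum_mul_antidiagonal_of_summable_norm h₁ h₂).of_norm.congr hterm).hasSum

end CauchyProduct

open NormedSpace

open scoped Matrix.Norms.Operator in
lemma cothSeries_add_mul_sinhDivSeries {n : ℕ} {M : Matrix (Fin n) (Fin n) ℂ}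
    (hsum₁ : Summable fun k : ℕ =>
      ((2 ^ (2 * k) * (bernoulli (2 * k) : ℂ)) / (Nat.factorial (2 * k) : ℂ)) • M ^ (2 * k))
    (hsum₂ : Summable fun k : ℕ => ((Nat.factorial (2 * k + 1) : ℂ))⁻¹ • M ^ (2 * k)) :
    (cothSeries n M + M) * sinhDivSeries n M = exp M := by
  have hcosh := hasSum_cosh_coth_mul_sinhDiv (𝕂 := ℂ) (x := M) (summable_norm_iff.mpr hsum₁)
    (summable_norm_iff.mpr hsum₂)
  have hsinh : HasSum (fun k : ℕ => ((2 * k + 1).factorial : ℂ)⁻¹ • M ^ (2 * k + 1))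
      (M * sinhDivSeries n M) := by
    refine (hsum₂.hasSum.mul_left M).congr_fun fun k => ?_
    rw [mul_smul_comm, pow_succ']
  rw [add_mul]
  exact (HasSum.even_add_odd (f := fun m : ℕ => (m.factorial : ℂ)⁻¹ • M ^ m) hcosh hsinh).unique
    (exp_series_hasSum_exp' (𝕂 := ℂ) M)

section DetExp

variable {m 𝔸 : Type*} [Fintype m] [DecidableEq m] [NormedCommRing 𝔸] [NormedAlgebra ℚ 𝔸]
  [CompleteSpace 𝔸] {A U : Matrix m m 𝔸}

lemma det_exp_sq_eq_one_of_transpose_eq_conj_neg (hU : IsUnit U)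
    (hA : Aᵀ = U * (-A) * U⁻¹) : (exp A).det ^ 2 = 1 := by
  have hneg : (exp A).det = (exp (-A)).det := by
    rw [← det_transpose, ← Matrix.exp_transpose, hA, Matrix.exp_conj _ _ hU, det_conj hU]
  rw [sq]
  nth_rw 2 [hneg]
  rw [← det_mul, ← Matrix.exp_add_of_commute _ _ (Commute.refl A).neg_right, add_neg_cancel,
    exp_zero, det_one]

lemma det_exp_eq_one_of_transpose_eq_conj_neg (hU : IsUnit U)
    (hA : Aᵀ = U * (-A) * U⁻¹) : (exp A).det = 1 := by
  -- conjugacy to `-A` only gives `det (exp A) = ±1`, so apply it to `A / 2`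
  have hhalf : ((2⁻¹ : ℚ) • A)ᵀ = U * (-((2⁻¹ : ℚ) • A)) * U⁻¹ := by
    rw [transpose_smul, hA, ← smul_neg, Matrix.mul_smul, Matrix.smul_mul]
  have hA2 : A = 2 • ((2⁻¹ : ℚ) • A) := by
    rw [two_nsmul, ← add_smul]; norm_num
  rw [hA2, Matrix.exp_nsmul, det_pow, det_exp_sq_eq_one_of_transpose_eq_conj_neg hU hhalf]

end DetExp

lemma transpose_inv_mul_eq_conj_neg {m α : Type*} [Fintype m] [DecidableEq m] [CommRing α]
    {G K : Matrix m m α} (hG : IsUnit G.det) (hGt : Gᵀ = G) (hK : Kᵀ = -K) :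
    (G⁻¹ * K)ᵀ = G * (-(G⁻¹ * K)) * G⁻¹ := by
  rw [transpose_mul, transpose_nonsing_inv, hGt, hK, mul_neg, neg_mul, ← mul_assoc,
    mul_nonsing_inv _ hG, one_mul, neg_mul]

theorem det_D_add_iR_general
    (n : ℕ) (g R : Matrix (Fin n) (Fin n) ℝ) (hg : g.PosDef) (hR : Rᵀ = -R)
    (t : ℝ) (ht : 0 < t)
    (M D : Matrix (Fin n) (Fin n) ℂ)
    (hM : M = (t : ℂ) • ((g.map Complex.ofReal)⁻¹
        * (Complex.I • R.map Complex.ofReal)))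
    (hD : D = (t : ℂ)⁻¹ • (g.map Complex.ofReal * cothSeries n M))
    (hsum₁ : Summable (fun k : ℕ =>
      ((2 ^ (2 * k) * (bernoulli (2 * k) : ℂ)) / (Nat.factorial (2 * k) : ℂ))
        • M ^ (2 * k)))
    (hsum₂ : Summable (fun k : ℕ =>
      ((Nat.factorial (2 * k + 1) : ℂ))⁻¹ • M ^ (2 * k))) :
    (D + Complex.I • R.map Complex.ofReal).det
      = (((g.map Complex.ofReal)⁻¹ * ((t : ℂ) • sinhDivSeries n M)).det)⁻¹ := by
  set G := g.map Complex.ofReal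
  set J := Complex.I • R.map Complex.ofReal
  have ht0 : (t : ℂ) ≠ 0 := Complex.ofReal_ne_zero.mpr ht.ne'
  have hG : IsUnit G.det := by
    rw [show G.det = g.det from (RingHom.map_det Complex.ofRealHom g).symm]
    exact isUnit_iff_ne_zero.mpr (Complex.ofReal_ne_zero.mpr hg.det_pos.ne')
  have hGt : Gᵀ = G := by
    rw [← transpose_map, ← conjTranspose_eq_transpose_of_trivial, hg.isHermitian.eq]
  have hJt : (t • J)ᵀ = -(t • J) := by
    rw [transpose_smul, transpose_smul, ← transpose_map, hR,
      Matrix.map_neg _ Complex.ofReal_neg, smul_neg, smul_neg]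
  have hMt : Mᵀ = G * (-M) * G⁻¹ := by
    rw [hM, ← Matrix.mul_smul]
    exact transpose_inv_mul_eq_conj_neg hG hGt hJt
  have hDJ : D + J = (t : ℂ)⁻¹ • (G * (cothSeries n M + M)) := by
    have hJ : J = (t : ℂ)⁻¹ • (G * M) := by
      rw [hM, Matrix.mul_smul, ← mul_assoc, mul_nonsing_inv _ hG, one_mul, inv_smul_smul₀ ht0]
    rw [hD, hJ, Matrix.mul_add, smul_add]
  have hdet : (cothSeries n M + M).det * (sinhDivSeries n M).det = 1 := by
    rw [← det_mul, cothSeries_add_mul_sinhDivSeries hsum₁ hsum₂,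
      det_exp_eq_one_of_transpose_eq_conj_neg ((isUnit_iff_isUnit_det G).mpr hG) hMt]
  rw [hDJ, det_smul, det_mul, det_mul, det_smul, det_nonsing_inv, Ring.inverse_eq_inv,
    eq_inv_of_mul_eq_one_right hdet, mul_inv, mul_inv, inv_inv, inv_inv, inv_pow]
  ring

/-- For `g` real symmetric positive definite, `R` real antisymmetric
and `D(t) = iR coth(t g⁻¹ iR) = (1/t) g Ψ(t g⁻¹ iR)`, one has
`det(D(t) + iR) = det(g⁻¹ sinh(t g⁻¹ iR)/(g⁻¹ iR))⁻¹`
(all matrix functions interpreted via their even power series, `t > 0` such that the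
series converge and the relevant matrices are invertible). -/
theorem det_D_add_iR
    (n : ℕ) (g R : Matrix (Fin n) (Fin n) ℝ) (hg : g.PosDef) (hR : Rᵀ = -R)
    (t : ℝ) (ht : 0 < t)
    (M D : Matrix (Fin n) (Fin n) ℂ)
    (hM : M = (t : ℂ) • ((g.map Complex.ofReal)⁻¹
        * (Complex.I • R.map Complex.ofReal)))
    (hD : D = (t : ℂ)⁻¹ • (g.map Complex.ofReal * cothSeries n M))
    (hsum₁ : Summable (fun k : ℕ =>
      ((2 ^ (2 * k) * (bernoulli (2 * k) : ℂ)) / (Nat.factorial (2 * k) : ℂ))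
        • M ^ (2 * k)))
    (hsum₂ : Summable (fun k : ℕ =>
      ((Nat.factorial (2 * k + 1) : ℂ))⁻¹ • M ^ (2 * k)))
    (hinv : IsUnit ((g.map Complex.ofReal)⁻¹ * ((t : ℂ) • sinhDivSeries n M)).det) :
    (D + Complex.I • R.map Complex.ofReal).det
      = (((g.map Complex.ofReal)⁻¹ * ((t : ℂ) • sinhDivSeries n M)).det)⁻¹ :=
  det_D_add_iR_general n g R hg hR t ht M D hM hD hsum₁ hsum₂
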